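/- Let C_t : 𝒳 → ℝ for t = 1, …, T be a sequence of functions on a set 𝒳, partition {1,…,T} into consecutive batches 𝒯_1, …, 𝒯_s each of length at most Δ_T, let x_j* minimize Σ_{t ∈ 𝒯_j} C_t over 𝒳 and x_t* minimize C_t over 𝒳. If V_j = Σ_{t ∈ 𝒯_j, t ≥ 2} sup_{x ∈ 𝒳} |C_t(x) - C_{t-1}(x)|, then Σ_{t ∈ 𝒯_j} (C_t(x_j*) - C_t(x_t*)) ≤ 2 Δ_T V_j. -/

import Mathlib

/-!
Within one batch the functions differ pointwise by at most `V`, the total variation over the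
batch. Comparing the batch sums at the batch minimizer `xj` and at an arbitrary point `y`
therefore costs `V` on each side, so `C t xj ≤ C t y + 2V` for every `t` in the batch.
Summing over the at most `ΔT` rounds of the batch gives the bound.
-/

open Finset

theorem abs_sub_le_sum_Ioc_abs_sub_pred (f : ℕ → ℝ) {a b : ℕ} (hab : a ≤ b) :
    |f b - f a| ≤ ∑ s ∈ Ioc a b, |f s - f (s - 1)| := by
  have := dist_le_Ico_sum_dist f hab
  rw [← Ico_add_one_add_one_eq_Ioc, ← sum_Ico_add']
  simpa [Real.dist_eq, abs_sub_comm] using this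

theorem abs_sub_le_sum_Ioc_of_mem_Icc (f : ℕ → ℝ) {t₁ t₂ a b : ℕ}
    (ha : a ∈ Icc t₁ t₂) (hb : b ∈ Icc t₁ t₂) :
    |f a - f b| ≤ ∑ s ∈ Ioc t₁ t₂, |f s - f (s - 1)| := by
  wlog hab : b ≤ a generalizing a b
  · rw [abs_sub_comm]
    exact this hb ha (le_of_not_ge hab)
  rw [mem_Icc] at ha hb
  calc |f a - f b| ≤ ∑ s ∈ Ioc b a, |f s - f (s - 1)| := abs_sub_le_sum_Ioc_abs_sub_pred f hab
    _ ≤ ∑ s ∈ Ioc t₁ t₂, |f s - f (s - 1)| :=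
      sum_le_sum_of_subset_of_nonneg (Ioc_subset_Ioc hb.1 ha.2) fun _ _ _ ↦ abs_nonneg _

theorem le_add_two_mul_of_sum_le {ι X : Type*} (S : Finset ι) (g : ι → X → ℝ) (V : ℝ)
    (hV : ∀ x, ∀ s ∈ S, ∀ t ∈ S, |g s x - g t x| ≤ V) {xj : X}
    (hxj : ∀ y, ∑ s ∈ S, g s xj ≤ ∑ s ∈ S, g s y) {t : ι} (ht : t ∈ S) (y : X) :
    g t xj ≤ g t y + 2 * V := by
  have hpoint : ∀ s ∈ S, g t xj - g t y ≤ (g s xj - g s y) + 2 * V := fun s hs ↦ by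
    have h₁ := (abs_le.mp (hV xj t ht s hs)).2
    have h₂ := (abs_le.mp (hV y s hs t ht)).2
    linarith
  have hsum : ∑ _s ∈ S, (g t xj - g t y) ≤ ∑ _s ∈ S, 2 * V :=
    calc ∑ _s ∈ S, (g t xj - g t y) ≤ ∑ s ∈ S, ((g s xj - g s y) + 2 * V) := sum_le_sum hpoint
      _ = (∑ s ∈ S, g s xj - ∑ s ∈ S, g s y) + ∑ _s ∈ S, 2 * V := by
        rw [sum_add_distrib, sum_sub_distrib]
      _ ≤ ∑ _s ∈ S, 2 * V := by linarith [hxj y]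
  rw [sum_const, sum_const] at hsum
  linarith [le_of_nsmul_le_nsmul_right (card_ne_zero_of_mem ht) hsum]

theorem batch_comparator_variation_general {X : Type*} (C : ℕ → X → ℝ)
    (t₁ t₂ ΔT : ℕ) (h1 : 1 ≤ t₁)
    (hcard : (Finset.Icc t₁ t₂).card ≤ ΔT)
    (hbdd : ∀ t, BddAbove (Set.range fun x => |C t x - C (t - 1) x|))
    (xj : X)
    (hxj : ∀ y, ∑ t ∈ Finset.Icc t₁ t₂, C t xj ≤ ∑ t ∈ Finset.Icc t₁ t₂, C t y)
    (xstar : ℕ → X) :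
    ∑ t ∈ Finset.Icc t₁ t₂, (C t xj - C t (xstar t)) ≤
      2 * ΔT * ∑ t ∈ (Finset.Icc t₁ t₂).filter (fun t => 2 ≤ t),
        ⨆ x, |C t x - C (t - 1) x| := by
  set V := ∑ t ∈ (Icc t₁ t₂).filter (fun t => 2 ≤ t), ⨆ x, |C t x - C (t - 1) x|
  have hsup_nonneg : ∀ t, 0 ≤ ⨆ x, |C t x - C (t - 1) x| := fun t ↦
    Real.iSup_nonneg fun _ ↦ abs_nonneg _
  have hV_nonneg : 0 ≤ V := sum_nonneg fun t _ ↦ hsup_nonneg t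
  have hIoc : Ioc t₁ t₂ ⊆ (Icc t₁ t₂).filter (fun t => 2 ≤ t) := fun s hs ↦ by
    simp only [mem_Ioc, mem_filter, mem_Icc] at hs ⊢
    omega
  have hvar : ∀ x, ∀ s ∈ Icc t₁ t₂, ∀ t ∈ Icc t₁ t₂, |C s x - C t x| ≤ V := fun x s hs t ht ↦
    calc |C s x - C t x| ≤ ∑ r ∈ Ioc t₁ t₂, |C r x - C (r - 1) x| :=
          abs_sub_le_sum_Ioc_of_mem_Icc (C · x) hs ht
      _ ≤ ∑ r ∈ Ioc t₁ t₂, ⨆ y, |C r y - C (r - 1) y| :=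
          sum_le_sum fun r _ ↦ le_ciSup (hbdd r) x
      _ ≤ V := sum_le_sum_of_subset_of_nonneg hIoc fun r _ _ ↦ hsup_nonneg r
  calc ∑ t ∈ Icc t₁ t₂, (C t xj - C t (xstar t))
      ≤ ∑ _t ∈ Icc t₁ t₂, 2 * V := sum_le_sum fun t ht ↦ by
        linarith [le_add_two_mul_of_sum_le _ C V hvar hxj ht (xstar t)]
    _ = #(Icc t₁ t₂) * (2 * V) := by rw [sum_const, nsmul_eq_mul]
    _ ≤ ΔT * (2 * V) := by gcongr
    _ = 2 * ΔT * V := by ring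

theorem batch_comparator_variation {X : Type*} [Nonempty X] (C : ℕ → X → ℝ)
    (t₁ t₂ ΔT : ℕ) (h1 : 1 ≤ t₁) (h12 : t₁ ≤ t₂)
    (hcard : (Finset.Icc t₁ t₂).card ≤ ΔT)
    (hbdd : ∀ t, BddAbove (Set.range fun x => |C t x - C (t - 1) x|))
    (xj : X)
    (hxj : ∀ y, ∑ t ∈ Finset.Icc t₁ t₂, C t xj ≤ ∑ t ∈ Finset.Icc t₁ t₂, C t y)
    (xstar : ℕ → X) (hxstar : ∀ t y, C t (xstar t) ≤ C t y) :
    ∑ t ∈ Finset.Icc t₁ t₂, (C t xj - C t (xstar t)) ≤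
      2 * ΔT * ∑ t ∈ (Finset.Icc t₁ t₂).filter (fun t => 2 ≤ t),
        ⨆ x, |C t x - C (t - 1) x| :=
  batch_comparator_variation_general C t₁ t₂ ΔT h1 hcard hbdd xj hxj xstar
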